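/- Let B be a noise-type Boolean algebra in Λ. Then for all x, y ∈ B the projections satisfy Q_x Q_y = Q_{x∧y}; in particular B is a commutative subset of Λ. -/

import Mathlib

open MeasureTheory Filter Topology

set_option synthInstance.maxHeartbeats 400000
noncomputable section

variable {Ω : Type*}

/-- The trivial σ-field augmented with all null sets: the least element `0` of `Λ`. -/
def nullSF {m0 : MeasurableSpace Ω} (μ : Measure Ω) : MeasurableSpace Ω :=
  MeasurableSpace.generateFrom {s : Set Ω | μ s = 0}

/-- Membership in `Λ`: a sub-σ-field of `m0` containing all null sets. -/
def InLam {m0 : MeasurableSpace Ω} (μ : Measure Ω) (m : MeasurableSpace Ω) : Prop :=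
  m ≤ m0 ∧ nullSF μ ≤ m

set_option synthInstance.maxHeartbeats 400000 in
/-- The type `L₂` subspace `L₂(m)` of `H = L₂(Ω, F, P)`. -/
abbrev L2S {m0 : MeasurableSpace Ω} (μ : Measure Ω) (m : MeasurableSpace Ω) :
    Submodule ℝ (Lp ℝ 2 μ) :=
  @lpMeas Ω ℝ ℝ _ _ _ m m0 2 μ

/-- The orthogonal projection of `H = L₂(Ω, F, P)` onto `L₂(m)`. -/
def Q {m0 : MeasurableSpace Ω} (μ : Measure Ω) (m : MeasurableSpace Ω) :
    Lp ℝ 2 μ →L[ℝ] Lp ℝ 2 μ :=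
  letI := Classical.dec (m ≤ m0)
  if hm : m ≤ m0 then
    haveI : Fact (m ≤ m0) := ⟨hm⟩
    (L2S μ m).subtypeL.comp (Submodule.orthogonalProjectionOnto (L2S μ m))
  else 0

/-- Strong operator convergence of the projections `Q (x n)` to `Q l`. -/
def SOTLim {m0 : MeasurableSpace Ω} (μ : Measure Ω) (x : ℕ → MeasurableSpace Ω)
    (l : MeasurableSpace Ω) : Prop :=
  ∀ f : Lp ℝ 2 μ, Tendsto (fun n => Q μ (x n) f) atTop (𝓝 (Q μ l f))

/-- Independence of two sub-σ-fields. -/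
def IndepSF {m0 : MeasurableSpace Ω} (μ : Measure Ω) (x y : MeasurableSpace Ω) : Prop :=
  ∀ s t : Set Ω, MeasurableSet[x] s → MeasurableSet[y] t → μ (s ∩ t) = μ s * μ t

/-- A noise-type Boolean algebra: a sublattice of `Λ` containing `0` and `1`, distributive and
complemented (hence Boolean), in which σ-fields with trivial intersection are independent. -/
def IsNTBA {m0 : MeasurableSpace Ω} (μ : Measure Ω) (B : Set (MeasurableSpace Ω)) : Prop :=
  (∀ m ∈ B, InLam μ m) ∧
  nullSF μ ∈ B ∧ m0 ∈ B ∧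
  (∀ x ∈ B, ∀ y ∈ B, x ⊓ y ∈ B ∧ x ⊔ y ∈ B) ∧
  (∀ x ∈ B, ∀ y ∈ B, ∀ z ∈ B, x ⊓ (y ⊔ z) = (x ⊓ y) ⊔ (x ⊓ z)) ∧
  (∀ x ∈ B, ∃ x' ∈ B, x ⊓ x' = nullSF μ ∧ x ⊔ x' = m0) ∧
  (∀ x ∈ B, ∀ y ∈ B, x ⊓ y = nullSF μ → IndepSF μ x y)

/-- The closure of `B ⊆ Λ` in the strong operator topology (which is metrizable, so sequential). -/
def Cl {m0 : MeasurableSpace Ω} (μ : Measure Ω) (B : Set (MeasurableSpace Ω)) :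
    Set (MeasurableSpace Ω) :=
  {x | InLam μ x ∧ ∃ b : ℕ → MeasurableSpace Ω, (∀ n, b n ∈ B) ∧ SOTLim μ b x}

/-!
Write `y'` for the complement of `y` in `B` and put `z = x ∧ y`, `w = x ∧ y'`. Distributivity
gives `x = z ∨ w`, and `w ∧ y ≤ y' ∧ y = 0`, so `w` is independent of `y`. Hence conditioning
a `y`-measurable function on `z ∨ w` is the same as conditioning it on `z ≤ y`: both sides have
the same integrals over the π-system of sets `s ∩ t` (`s ∈ z`, `t ∈ w`), where independence
splits off the factor `P t`. Applied to `E[f | y]` this gives `Q_x Q_y = Q_z Q_y = Q_z`, and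
the commutation follows from the symmetry of `x ∧ y`.
-/

open ProbabilityTheory

lemma IsPiSystem.image2_inter {α : Type*} {C D : Set (Set α)} (hC : IsPiSystem C)
    (hD : IsPiSystem D) : IsPiSystem (Set.image2 (· ∩ ·) C D) := by
  rintro _ ⟨s₁, hs₁, t₁, ht₁, rfl⟩ _ ⟨s₂, hs₂, t₂, ht₂, rfl⟩ hst
  rw [Set.inter_inter_inter_comm] at hst ⊢
  exact Set.mem_image2_of_mem (hC _ hs₁ _ hs₂ hst.left) (hD _ ht₁ _ ht₂ hst.right)

lemma MeasurableSpace.sup_eq_generateFrom_image2_inter (z w : MeasurableSpace Ω) :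
    z ⊔ w = generateFrom
      (Set.image2 (· ∩ ·) {s | MeasurableSet[z] s} {t | MeasurableSet[w] t}) := by
  refine le_antisymm (sup_le ?_ ?_) (generateFrom_le ?_)
  · exact fun s hs => measurableSet_generateFrom
      ⟨s, hs, Set.univ, MeasurableSet.univ, Set.inter_univ s⟩
  · exact fun t ht => measurableSet_generateFrom
      ⟨Set.univ, MeasurableSet.univ, t, ht, Set.univ_inter t⟩
  · rintro _ ⟨s, hs, t, ht, rfl⟩
    exact (le_sup_left (a := z) (b := w) _ hs).inter (le_sup_right (a := z) (b := w) _ ht)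

lemma setIntegral_eq_of_isPiSystem {m m0 : MeasurableSpace Ω} {μ : Measure Ω}
    {C : Set (Set Ω)} {f g : Ω → ℝ} (hm : m ≤ m0) (h_eq : m = MeasurableSpace.generateFrom C)
    (h_inter : IsPiSystem C) (hf : Integrable f μ) (hg : Integrable g μ)
    (h_univ : ∫ a, f a ∂μ = ∫ a, g a ∂μ) (basic : ∀ s ∈ C, ∫ a in s, f a ∂μ = ∫ a in s, g a ∂μ)
    {s : Set Ω} (hs : MeasurableSet[m] s) : ∫ a in s, f a ∂μ = ∫ a in s, g a ∂μ := by
  induction s, hs using MeasurableSpace.induction_on_inter h_eq h_inter with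
  | empty => simp
  | basic s hs => exact basic s hs
  | compl s hs ih =>
    rw [setIntegral_compl (hm s hs) hf, setIntegral_compl (hm s hs) hg, ih, h_univ]
  | iUnion s hdisj hs ih =>
    rw [integral_iUnion (fun i => hm _ (hs i)) hdisj hf.integrableOn,
      integral_iUnion (fun i => hm _ (hs i)) hdisj hg.integrableOn]
    exact tsum_congr ih

section Independence

variable {y w m0 : MeasurableSpace Ω} {μ : Measure Ω} [IsFiniteMeasure μ]

lemma setIntegral_inter_eq_measureReal_mul_of_indep (hy : y ≤ m0) (hw : w ≤ m0)
    (hind : Indep y w μ) {g : Ω → ℝ} (hgm : StronglyMeasurable[y] g) (hg : Integrable g μ)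
    {s t : Set Ω} (hs : MeasurableSet[y] s) (ht : MeasurableSet[w] t) :
    ∫ a in s ∩ t, g a ∂μ = μ.real t * ∫ a in s, g a ∂μ := by
  have h_const : μ[s.indicator g | w] =ᵐ[μ] fun _ => ∫ a, s.indicator g a ∂μ :=
    condExp_indep_eq hy hw (hgm.indicator hs) hind
  calc ∫ a in s ∩ t, g a ∂μ = ∫ a in t, s.indicator g a ∂μ := by
        rw [setIntegral_indicator (hy s hs), Set.inter_comm]
    _ = ∫ a in t, (μ[s.indicator g | w]) a ∂μ :=
        (setIntegral_condExp hw (hg.indicator (hy s hs)) ht).symm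
    _ = ∫ _ in t, (∫ a, s.indicator g a ∂μ) ∂μ := integral_congr_ae (ae_restrict_of_ae h_const)
    _ = μ.real t * ∫ a in s, g a ∂μ := by
        rw [setIntegral_const, smul_eq_mul, integral_indicator (hy s hs)]

lemma condExp_sup_indep_eq {z : MeasurableSpace Ω} (hzy : z ≤ y) (hy : y ≤ m0) (hw : w ≤ m0)
    (hind : Indep y w μ) {f : Ω → ℝ} (hfm : StronglyMeasurable[y] f) (hf : Integrable f μ) :
    μ[f | z ⊔ w] =ᵐ[μ] μ[f | z] := by
  have hz : z ≤ m0 := hzy.trans hy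
  have hzw : z ⊔ w ≤ m0 := sup_le hz hw
  have hgm : StronglyMeasurable[y] (μ[f | z]) := stronglyMeasurable_condExp.mono hzy
  refine (ae_eq_condExp_of_forall_setIntegral_eq hzw hf
    (fun s _ _ => integrable_condExp.integrableOn) (fun s hs _ => ?_)
    (stronglyMeasurable_condExp.mono le_sup_left).aestronglyMeasurable).symm
  refine setIntegral_eq_of_isPiSystem hzw (MeasurableSpace.sup_eq_generateFrom_image2_inter z w)
    ((@MeasurableSpace.isPiSystem_measurableSet Ω z).image2_inter
      (@MeasurableSpace.isPiSystem_measurableSet Ω w))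
    integrable_condExp hf (integral_condExp hz) ?_ hs
  rintro _ ⟨s, hs, t, ht, rfl⟩
  rw [setIntegral_inter_eq_measureReal_mul_of_indep hy hw hind hgm integrable_condExp (hzy s hs) ht,
    setIntegral_inter_eq_measureReal_mul_of_indep hy hw hind hfm hf (hzy s hs) ht,
    setIntegral_condExp hz hf hs]

end Independence

section Projection

variable {m m0 : MeasurableSpace Ω} {μ : Measure Ω} [IsFiniteMeasure μ]

lemma Q_ae_eq_condExp (hm : m ≤ m0) (f : Lp ℝ 2 μ) : (Q μ m f : Ω → ℝ) =ᵐ[μ] μ[f | m] := by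
  have hQ : Q μ m f = (condExpL2 ℝ ℝ hm f : Lp ℝ 2 μ) := by
    simp only [Q, dif_pos hm]
    rfl
  have h := (Lp.memLp f).condExpL2_ae_eq_condExp (𝕜 := ℝ) hm
  rwa [Lp.toLp_coeFn, ← hQ] at h

lemma Q_sup_comp_Q_of_indep {y z w : MeasurableSpace Ω} (hzy : z ≤ y) (hy : y ≤ m0)
    (hw : w ≤ m0) (hind : Indep y w μ) : (Q μ (z ⊔ w)).comp (Q μ y) = Q μ z := by
  have hz : z ≤ m0 := hzy.trans hy
  ext1 f
  refine Lp.ext ?_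
  calc (Q μ (z ⊔ w) (Q μ y f) : Ω → ℝ)
      =ᵐ[μ] μ[Q μ y f | z ⊔ w] := Q_ae_eq_condExp (sup_le hz hw) _
    _ =ᵐ[μ] μ[μ[f | y] | z ⊔ w] := condExp_congr_ae (Q_ae_eq_condExp hy f)
    _ =ᵐ[μ] μ[μ[f | y] | z] :=
        condExp_sup_indep_eq hzy hy hw hind stronglyMeasurable_condExp integrable_condExp
    _ =ᵐ[μ] μ[f | z] := condExp_condExp_of_le hzy hy
    _ =ᵐ[μ] Q μ z f := (Q_ae_eq_condExp hz f).symm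

end Projection

lemma indep_of_indepSF {x y _mΩ : MeasurableSpace Ω} {μ : Measure Ω} (h : IndepSF μ x y) :
    Indep x y μ :=
  (Indep_iff x y μ).mpr fun _ _ hs ht => h _ _ hs ht

lemma IsNTBA.exists_indep_eq_inf_sup {m0 : MeasurableSpace Ω} {μ : Measure Ω}
    {B : Set (MeasurableSpace Ω)} (hB : IsNTBA μ B) {x y : MeasurableSpace Ω} (hx : x ∈ B)
    (hy : y ∈ B) : ∃ w ≤ m0, Indep y w μ ∧ x = x ⊓ y ⊔ w := by
  obtain ⟨hlam, -, -, hlat, hdist, hcompl, hindep⟩ := hB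
  obtain ⟨y', hy', hyy'_inf, hyy'_sup⟩ := hcompl y hy
  have hw : x ⊓ y' ∈ B := (hlat x hx y' hy').1
  have hwy : x ⊓ y' ⊓ y = nullSF μ := by
    refine le_antisymm ?_ (le_inf (hlam _ hw).2 (hlam y hy).2)
    calc x ⊓ y' ⊓ y ≤ y' ⊓ y := inf_le_inf_right y inf_le_right
      _ = nullSF μ := (inf_comm y' y).trans hyy'_inf
  refine ⟨x ⊓ y', (hlam _ hw).1, (indep_of_indepSF (hindep _ hw y hy hwy)).symm, ?_⟩
  rw [← hdist x hx y hy y' hy', hyy'_sup, inf_eq_left.mpr (hlam x hx).1]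

/-- For a noise-type Boolean algebra `B`, the projections satisfy `Q_x Q_y = Q_{x ∧ y}` for
all `x, y ∈ B`; in particular `B` is commutative. -/
theorem stmt14 {m0 : MeasurableSpace Ω} (μ : Measure Ω) [IsProbabilityMeasure μ]
    (B : Set (MeasurableSpace Ω)) (hB : IsNTBA μ B) :
    ∀ x ∈ B, ∀ y ∈ B,
      (Q μ x).comp (Q μ y) = Q μ (x ⊓ y) ∧
      (Q μ x).comp (Q μ y) = (Q μ y).comp (Q μ x) := by
  have h_comp : ∀ x ∈ B, ∀ y ∈ B, (Q μ x).comp (Q μ y) = Q μ (x ⊓ y) := by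
    intro x hx y hy
    obtain ⟨w, hw, hind, hxw⟩ := hB.exists_indep_eq_inf_sup hx hy
    have h := Q_sup_comp_Q_of_indep (z := x ⊓ y) inf_le_right (hB.1 y hy).1 hw hind
    rwa [← hxw] at h
  intro x hx y hy
  refine ⟨h_comp x hx y hy, ?_⟩
  rw [h_comp x hx y hy, h_comp y hy x hx, inf_comm]
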